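/- Let 1 < p < N, 0 ≤ s < p, p*(s) = p(N−s)/(N−p), and on ℝ^N_+ set X = (|x|²+(1−y)²)/(|x|²+(1+y)²) and V_p as in the improved Hardy inequality. Then the infimum over nonzero u ∈ C_c^1(ℝ^N_+) of ∫_{ℝ^N_+} |∇u|^p dxdy divided by (∫_{ℝ^N_+} |u|^{p*(s)} (|x|²+(1−y)²)^{−s/2} V_p^{p/2} (1 − X^{(N−p)/(2(p−1))})^{−(p−1)(p−s)/(N−p)} dxdy)^{p/p*(s)} equals 0. -/

import Mathlib

/-!
Near the boundary point `0` the weight blows up like `y^{-(p+q)}`, `q = (p-1)(p-s)/(N-p)`: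
there `1 - X ≤ 4y`, hence `1 - X^γ ≲ y` for `γ = (N-p)/(2(p-1))`, and `V_p ≥ (1 - X^γ)^{-2}`.
A bump `u_ε` of radius `ε` centred at `2ε e_N` therefore has Dirichlet energy `O(ε^{N-p})`
and weighted integral `≳ ε^{N-p-q}`, so its quotient is `O(ε^{(p-s)(N-1)/(N-s)})` → `0`.
-/

open Real MeasureTheory

/-- `|x|² + (1−y)²` for `z = (x, y) ∈ ℝ^{n} × ℝ`. -/
noncomputable def AA {n : ℕ} (z : EuclideanSpace ℝ (Fin (n + 1))) : ℝ :=
  (∑ i : Fin n, z (Fin.castSucc i) ^ 2) + (1 - z (Fin.last n)) ^ 2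

/-- `|x|² + (1+y)²` for `z = (x, y) ∈ ℝ^{n} × ℝ`. -/
noncomputable def BB {n : ℕ} (z : EuclideanSpace ℝ (Fin (n + 1))) : ℝ :=
  (∑ i : Fin n, z (Fin.castSucc i) ^ 2) + (1 + z (Fin.last n)) ^ 2

/-- `X = (|x|²+(1−y)²)/(|x|²+(1+y)²)`. -/
noncomputable def XX {n : ℕ} (z : EuclideanSpace ℝ (Fin (n + 1))) : ℝ := AA z / BB z

/-- The potential `V_p` of the improved Hardy inequality (with `N = n + 1`). -/
noncomputable def Vp {n : ℕ} (p : ℝ) (z : EuclideanSpace ℝ (Fin (n + 1))) : ℝ :=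
  (1 + XX z ^ (((n + 1 : ℝ) - 1) / (p - 1))
    - 2 * XX z ^ (((n + 1 : ℝ) - p) / (2 * (p - 1))) * (BB z)⁻¹ * (‖z‖ ^ 2 - 1))
  / (1 - XX z ^ (((n + 1 : ℝ) - p) / (2 * (p - 1)))) ^ 2

open Metric Filter Topology

lemma one_sub_rpow_le_max_mul {x a : ℝ} (hx0 : 0 ≤ x) (hx1 : x ≤ 1) :
    1 - x ^ a ≤ max a 1 * (1 - x) := by
  rcases le_total a 1 with ha1 | ha1
  · have := self_le_rpow_of_le_one hx0 hx1 ha1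
    rw [max_eq_right ha1]; linarith
  · have := one_add_mul_self_le_rpow_one_add (s := x - 1) (by linarith) ha1
    rw [max_eq_left ha1]; simp only [add_sub_cancel] at this; linarith

lemma mul_rpow_div_mul_rpow_rpow {a b ε α β t : ℝ} (hb : 0 ≤ b) (hε : 0 < ε) :
    a * ε ^ α / (b * ε ^ β) ^ t = a / b ^ t * ε ^ (α - β * t) := by
  rw [mul_rpow hb (rpow_nonneg hε.le _), ← rpow_mul hε.le, rpow_sub hε]; ring

lemma Real.sInf_eq_zero_of_nonneg_of_forall_lt {S : Set ℝ} (h0 : ∀ r ∈ S, 0 ≤ r)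
    (hlt : ∀ δ > 0, ∃ r ∈ S, r < δ) : sInf S = 0 := by
  obtain ⟨r, hr, -⟩ := hlt 1 one_pos
  refine le_antisymm ((Real.sInf_le_iff ⟨0, h0⟩ ⟨r, hr⟩).2 fun δ hδ => ?_)
    (Real.sInf_nonneg h0)
  simpa using hlt δ hδ

section Bump

variable {E : Type*} [NormedAddCommGroup E] [NormedSpace ℝ E] [HasContDiffBump E]

lemma ContDiffBump.apply_eq_comp_smul_sub {c : E} (f : ContDiffBump c) (g : ContDiffBump (0 : E))
    (h : f.rOut / f.rIn = g.rOut / g.rIn) (x : E) : f x = g ((g.rIn / f.rIn) • (x - c)) := by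
  rw [f.apply, g.apply, h, sub_zero, smul_smul, inv_mul_eq_div, div_div_cancel_left' g.rIn_pos.ne']

lemma ContDiffBump.exists_norm_fderiv_le [FiniteDimensional ℝ E] (g : ContDiffBump (0 : E)) :
    ∃ M, ∀ (c : E) (f : ContDiffBump c), f.rOut / f.rIn = g.rOut / g.rIn →
      ∀ x, ‖fderiv ℝ f x‖ ≤ M / f.rIn := by
  obtain ⟨M, hM⟩ := (g.hasCompactSupport.fderiv (𝕜 := ℝ)).exists_bound_of_continuous
    ((g.contDiff (n := 1)).continuous_fderiv one_ne_zero)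
  refine ⟨g.rIn * M, fun c f hfg x => ?_⟩
  have hf : ⇑f = fun x => g ((g.rIn / f.rIn) • (x - c)) :=
    funext (f.apply_eq_comp_smul_sub g hfg)
  have ha : 0 < g.rIn / f.rIn := div_pos g.rIn_pos f.rIn_pos
  rw [hf, fderiv_comp_sub (f := fun y => g ((g.rIn / f.rIn) • y)), fderiv_comp_smul, norm_smul,
    Real.norm_of_nonneg ha.le, mul_div_right_comm]
  exact mul_le_mul_of_nonneg_left (hM _) ha.le

end Bump

lemma setIntegral_rpow_norm_fderiv_le {E : Type*} [NormedAddCommGroup E] [NormedSpace ℝ E]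
    [MeasurableSpace E] [BorelSpace E] {μ : Measure E} [IsFiniteMeasureOnCompacts μ]
    {u : E → ℝ} {K : Set E} (hK : IsCompact K) (hu : tsupport u ⊆ K) {L p : ℝ} (hp : 0 < p)
    (hL : ∀ x, ‖fderiv ℝ u x‖ ≤ L) (S : Set E) :
    ∫ x in S, ‖fderiv ℝ u x‖ ^ p ∂μ ≤ L ^ p * μ.real K := by
  have hKm := hK.isClosed.measurableSet
  have hbound : ∀ x, ‖fderiv ℝ u x‖ ^ p ≤ K.indicator (fun _ => L ^ p) x := by
    intro x
    by_cases hx : x ∈ K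
    · rw [Set.indicator_of_mem hx]
      exact rpow_le_rpow (norm_nonneg _) (hL x) hp.le
    · have : fderiv ℝ u x = 0 :=
        Function.notMem_support.1 fun h => hx (hu (support_fderiv_subset ℝ h))
      rw [Set.indicator_of_notMem hx, this, norm_zero, zero_rpow hp.ne']
  calc ∫ x in S, ‖fderiv ℝ u x‖ ^ p ∂μ
      ≤ ∫ x in S, K.indicator (fun _ => L ^ p) x ∂μ :=
        integral_mono_of_nonneg (.of_forall fun _ => by positivity)
          ((integrableOn_const hK.measure_lt_top.ne).integrable_indicator hKm).restrict
          (.of_forall hbound)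
    _ = L ^ p * μ.real (K ∩ S) := by
        rw [integral_indicator_const _ hKm, measureReal_restrict_apply hKm, smul_eq_mul, mul_comm]
    _ ≤ L ^ p * μ.real K :=
        mul_le_mul_of_nonneg_left (measureReal_mono Set.inter_subset_left hK.measure_lt_top.ne)
          (rpow_nonneg ((norm_nonneg _).trans (hL 0)) p)

section HardySobolev

variable {n : ℕ} {p s : ℝ} {z : EuclideanSpace ℝ (Fin (n + 1))}

def upperHalfSpace (n : ℕ) : Set (EuclideanSpace ℝ (Fin (n + 1))) := {z | 0 < z (Fin.last n)}

lemma isOpen_upperHalfSpace : IsOpen (upperHalfSpace n) :=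
  isOpen_lt continuous_const (EuclideanSpace.proj (Fin.last n)).continuous

lemma sq_norm_eq_sum_castSucc_add_sq_last :
    ‖z‖ ^ 2 = (∑ i : Fin n, z (Fin.castSucc i) ^ 2) + z (Fin.last n) ^ 2 := by
  rw [EuclideanSpace.norm_eq, sq_sqrt (by positivity), Fin.sum_univ_castSucc]
  simp [sq_abs]

lemma AA_eq : AA z = ‖z‖ ^ 2 + 1 - 2 * z (Fin.last n) := by
  rw [AA, sq_norm_eq_sum_castSucc_add_sq_last]; ring

lemma BB_eq : BB z = ‖z‖ ^ 2 + 1 + 2 * z (Fin.last n) := by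
  rw [BB, sq_norm_eq_sum_castSucc_add_sq_last]; ring

@[fun_prop]
lemma continuous_AA : Continuous (AA (n := n)) := by
  unfold AA; fun_prop

@[fun_prop]
lemma continuous_BB : Continuous (BB (n := n)) := by
  unfold BB; fun_prop

lemma AA_nonneg (z : EuclideanSpace ℝ (Fin (n + 1))) : 0 ≤ AA z :=
  add_nonneg (Finset.sum_nonneg fun _ _ => sq_nonneg _) (sq_nonneg _)

lemma AA_pos (hz : ‖z‖ < 1) : 0 < AA z := by
  have hy : z (Fin.last n) ≤ ‖z‖ := (le_abs_self _).trans (PiLp.norm_apply_le z _)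
  rw [AA_eq]; nlinarith [norm_nonneg z]

lemma AA_le_two (hy : 0 ≤ z (Fin.last n)) (hz : ‖z‖ ≤ 1) : AA z ≤ 2 := by
  rw [AA_eq]; nlinarith [norm_nonneg z]

lemma one_le_BB (hy : 0 ≤ z (Fin.last n)) : 1 ≤ BB z := by
  rw [BB_eq]; nlinarith [norm_nonneg z]

lemma XX_nonneg (hy : 0 ≤ z (Fin.last n)) : 0 ≤ XX z :=
  div_nonneg (AA_nonneg z) (zero_le_one.trans (one_le_BB hy))

lemma one_sub_XX (hy : 0 ≤ z (Fin.last n)) : 1 - XX z = 4 * z (Fin.last n) / BB z := by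
  rw [XX, one_sub_div (zero_lt_one.trans_le (one_le_BB hy)).ne', AA_eq, BB_eq]; ring

lemma XX_lt_one (hy : 0 < z (Fin.last n)) : XX z < 1 := by
  have : 0 < 4 * z (Fin.last n) / BB z := div_pos (by linarith) (by linarith [one_le_BB hy.le])
  linarith [one_sub_XX hy.le]

lemma XX_le_one (hy : 0 ≤ z (Fin.last n)) : XX z ≤ 1 := by
  have : 0 ≤ 4 * z (Fin.last n) / BB z := div_nonneg (by linarith) (by linarith [one_le_BB hy])
  linarith [one_sub_XX hy]

lemma one_sub_XX_le (hy : 0 ≤ z (Fin.last n)) : 1 - XX z ≤ 4 * z (Fin.last n) := by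
  rw [one_sub_XX hy]; exact div_le_self (by linarith) (one_le_BB hy)

lemma one_sub_XX_rpow_le (hy : 0 ≤ z (Fin.last n)) (γ : ℝ) :
    1 - XX z ^ γ ≤ max γ 1 * (4 * z (Fin.last n)) :=
  (one_sub_rpow_le_max_mul (XX_nonneg hy) (XX_le_one hy)).trans
    (mul_le_mul_of_nonneg_left (one_sub_XX_le hy) (by positivity))

lemma volume_real_closedBall (c : EuclideanSpace ℝ (Fin (n + 1))) {r : ℝ} (hr : 0 ≤ r) :
    volume.real (closedBall c r)
      = r ^ ((n : ℝ) + 1) * volume.real (ball (0 : EuclideanSpace ℝ (Fin (n + 1))) 1) := by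
  rw [Measure.addHaar_real_closedBall _ _ hr, finrank_euclideanSpace_fin, ← rpow_natCast]
  push_cast; rfl

lemma mem_closedBall_single_last {ε : ℝ}
    (hz : z ∈ closedBall (EuclideanSpace.single (Fin.last n) (2 * ε)) ε) :
    ε ≤ z (Fin.last n) ∧ z (Fin.last n) ≤ 3 * ε ∧ ‖z‖ ≤ 3 * ε := by
  rw [mem_closedBall, dist_eq_norm] at hz
  have hy := (PiLp.norm_apply_le _ (Fin.last n)).trans hz
  simp only [PiLp.sub_apply, PiLp.single_apply, if_true, Real.norm_eq_abs, abs_le] at hy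
  have hnorm := norm_le_norm_add_norm_sub' z (EuclideanSpace.single (Fin.last n) (2 * ε))
  rw [PiLp.norm_single, Real.norm_of_nonneg (by linarith)] at hnorm
  exact ⟨by linarith, by linarith, by linarith⟩

noncomputable def hardyExponent (n : ℕ) (p : ℝ) : ℝ := ((n + 1 : ℝ) - p) / (2 * (p - 1))

lemma hardyExponent_pos (hp1 : 1 < p) (hpN : p < n + 1) : 0 < hardyExponent n p :=
  div_pos (by linarith) (by linarith)

lemma XX_rpow_hardyExponent_lt_one (hp1 : 1 < p) (hpN : p < n + 1) (hy : 0 < z (Fin.last n)) :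
    XX z ^ hardyExponent n p < 1 :=
  rpow_lt_one (XX_nonneg hy.le) (XX_lt_one hy) (hardyExponent_pos hp1 hpN)

lemma Vp_eq (hp1 : p ≠ 1) (z : EuclideanSpace ℝ (Fin (n + 1))) :
    Vp p z = (1 + XX z ^ (2 * hardyExponent n p + 1)
      - 2 * XX z ^ hardyExponent n p * (BB z)⁻¹ * (‖z‖ ^ 2 - 1))
      / (1 - XX z ^ hardyExponent n p) ^ 2 := by
  have : ((n + 1 : ℝ) - 1) / (p - 1) = 2 * hardyExponent n p + 1 := by
    rw [hardyExponent]; field_simp [sub_ne_zero.2 hp1]; ring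
  rw [Vp, this, hardyExponent]

lemma Vp_nonneg (hp1 : 1 < p) (hpN : p < n + 1) (hy : 0 < z (Fin.last n)) : 0 ≤ Vp p z := by
  rw [Vp_eq hp1.ne']
  set γ := hardyExponent n p
  have hγ : 0 < γ := hardyExponent_pos hp1 hpN
  have hB : 0 < BB z := zero_lt_one.trans_le (one_le_BB hy.le)
  have hX0 := XX_nonneg hy.le
  have hXγ1 : XX z ^ γ ≤ 1 := (XX_rpow_hardyExponent_lt_one hp1 hpN hy).le
  have key : 1 + XX z ^ (2 * γ + 1) - 2 * XX z ^ γ * (BB z)⁻¹ * (‖z‖ ^ 2 - 1)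
      = (1 - XX z ^ γ) * (1 - XX z ^ γ * XX z) + 4 * XX z ^ γ / BB z := by
    rw [rpow_add_one' hX0 (by linarith), two_mul, rpow_add' hX0 (by linarith)]
    have hXB : XX z * BB z = AA z := div_mul_cancel₀ _ hB.ne'
    have : ‖z‖ ^ 2 - 1 = (AA z + BB z) / 2 - 2 := by rw [AA_eq, BB_eq]; ring
    rw [this, ← hXB]; field_simp; ring
  refine div_nonneg ?_ (sq_nonneg _)
  rw [key]
  have : XX z ^ γ * XX z ≤ 1 := mul_le_one₀ hXγ1 hX0 (XX_lt_one hy).le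
  exact add_nonneg (mul_nonneg (by linarith) (by linarith)) (by positivity)

lemma inv_sq_le_Vp (hp1 : 1 < p) (hpN : p < n + 1) (hy : 0 < z (Fin.last n)) (hz : ‖z‖ ≤ 1) :
    ((1 - XX z ^ hardyExponent n p) ^ 2)⁻¹ ≤ Vp p z := by
  have hB : 0 < BB z := zero_lt_one.trans_le (one_le_BB hy.le)
  have hX0 := XX_nonneg hy.le
  have hD : 0 < (1 - XX z ^ hardyExponent n p) ^ 2 := by
    have := XX_rpow_hardyExponent_lt_one hp1 hpN hy; positivity
  have hnum : 1 ≤ 1 + XX z ^ (2 * hardyExponent n p + 1)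
      - 2 * XX z ^ hardyExponent n p * (BB z)⁻¹ * (‖z‖ ^ 2 - 1) := by
    have : ‖z‖ ^ 2 - 1 ≤ 0 := by nlinarith [norm_nonneg z]
    have : 0 ≤ 2 * XX z ^ hardyExponent n p * (BB z)⁻¹ := by positivity
    have : 0 ≤ XX z ^ (2 * hardyExponent n p + 1) := rpow_nonneg hX0 _
    nlinarith
  rw [Vp_eq hp1.ne', inv_eq_one_div]
  exact div_le_div_of_nonneg_right hnum hD.le

noncomputable def hardySobolevWeight (p s : ℝ) (z : EuclideanSpace ℝ (Fin (n + 1))) : ℝ :=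
  AA z ^ (-(s / 2)) * Vp p z ^ (p / 2)
    * (1 - XX z ^ hardyExponent n p) ^ (-((p - 1) * (p - s) / ((n + 1 : ℝ) - p)))

lemma hardySobolevWeight_nonneg (hp1 : 1 < p) (hpN : p < n + 1) (hy : 0 < z (Fin.last n)) :
    0 ≤ hardySobolevWeight p s z := by
  have := Vp_nonneg hp1 hpN hy
  have := AA_nonneg z
  have : 0 ≤ 1 - XX z ^ hardyExponent n p := by
    linarith [XX_rpow_hardyExponent_lt_one hp1 hpN hy]
  unfold hardySobolevWeight
  positivity

lemma hardySobolevWeight_ge (hp1 : 1 < p) (hpN : p < n + 1) (hs0 : 0 ≤ s) (hsp : s < p)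
    (hy : 0 < z (Fin.last n)) (hz : ‖z‖ < 1) :
    2 ^ (-(s / 2)) * (max (hardyExponent n p) 1 * (4 * z (Fin.last n)))
      ^ (-(p + (p - 1) * (p - s) / ((n + 1 : ℝ) - p)))
      ≤ hardySobolevWeight p s z := by
  set q := (p - 1) * (p - s) / ((n + 1 : ℝ) - p)
  have hq : 0 ≤ q := div_nonneg (mul_nonneg (by linarith) (by linarith)) (by linarith)
  set D := 1 - XX z ^ hardyExponent n p
  have hD : 0 < D := by linarith [XX_rpow_hardyExponent_lt_one hp1 hpN hy]
  have hAA : 2 ^ (-(s / 2)) ≤ AA z ^ (-(s / 2)) :=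
    rpow_le_rpow_of_nonpos (AA_pos hz) (AA_le_two hy.le hz.le) (by linarith)
  have hVp : D ^ (-p) ≤ Vp p z ^ (p / 2) :=
    calc D ^ (-p) = ((D ^ 2)⁻¹) ^ (p / 2) := by
          rw [inv_rpow (by positivity), ← rpow_natCast, ← rpow_mul hD.le, rpow_neg hD.le]
          norm_num; ring_nf
      _ ≤ Vp p z ^ (p / 2) :=
          rpow_le_rpow (by positivity) (inv_sq_le_Vp hp1 hpN hy hz.le) (by linarith)
  calc 2 ^ (-(s / 2)) * (max (hardyExponent n p) 1 * (4 * z (Fin.last n))) ^ (-(p + q))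
      ≤ 2 ^ (-(s / 2)) * D ^ (-(p + q)) := by
        gcongr 2 ^ (-(s / 2)) * ?_
        exact rpow_le_rpow_of_nonpos hD (one_sub_XX_rpow_le hy.le _) (by linarith)
    _ = 2 ^ (-(s / 2)) * D ^ (-p) * D ^ (-q) := by rw [neg_add, rpow_add hD, mul_assoc]
    _ ≤ hardySobolevWeight p s z := by
      unfold hardySobolevWeight
      gcongr
      exact rpow_nonneg (AA_nonneg z) _

lemma continuousOn_hardySobolevWeight (hp1 : 1 < p) (hpN : p < n + 1) :
    ContinuousOn (hardySobolevWeight (n := n) p s) (upperHalfSpace n ∩ ball 0 1) := by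
  rintro z ⟨hy, hz⟩
  replace hy : 0 < z (Fin.last n) := hy
  replace hz : ‖z‖ < 1 := mem_ball_zero_iff.1 hz
  apply ContinuousAt.continuousWithinAt
  have hA := (AA_pos hz).ne'
  have hB : BB z ≠ 0 := (zero_lt_one.trans_le (one_le_BB hy.le)).ne'
  have hD : 1 - XX z ^ hardyExponent n p ≠ 0 := by
    linarith [XX_rpow_hardyExponent_lt_one hp1 hpN hy]
  have hD2 := pow_ne_zero 2 hD
  have hγ := (hardyExponent_pos hp1 hpN).le
  have hγ' : 0 ≤ 2 * hardyExponent n p + 1 := by linarith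
  have hp : 0 ≤ p / 2 := by linarith
  unfold hardySobolevWeight
  rw [show Vp p = _ from funext (Vp_eq hp1.ne')]
  unfold XX
  fun_prop (disch := first | assumption | exact Or.inl ‹_› | exact Or.inr ‹_›)

noncomputable def boundaryBump (n : ℕ) {ε : ℝ} (hε : 0 < ε) :
    ContDiffBump (EuclideanSpace.single (Fin.last n) (2 * ε) : EuclideanSpace ℝ (Fin (n + 1))) :=
  ⟨ε / 2, ε, half_pos hε, half_lt_self hε⟩

lemma tsupport_boundaryBump_subset {ε : ℝ} (hε : 0 < ε) :
    tsupport (boundaryBump n hε) ⊆ upperHalfSpace n := by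
  intro z hz
  rw [ContDiffBump.tsupport_eq] at hz
  exact hε.trans_le (mem_closedBall_single_last hz).1

lemma exists_integral_fderiv_boundaryBump_le (hp : 0 < p) :
    ∃ K, ∀ ε (hε : 0 < ε),
      ∫ z in upperHalfSpace n, ‖fderiv ℝ (boundaryBump n hε) z‖ ^ p
        ≤ K * ε ^ ((n : ℝ) + 1 - p) := by
  obtain ⟨M, hM⟩ := ContDiffBump.exists_norm_fderiv_le
    (⟨1, 2, one_pos, one_lt_two⟩ : ContDiffBump (0 : EuclideanSpace ℝ (Fin (n + 1))))
  refine ⟨(2 * M) ^ p * volume.real (ball (0 : EuclideanSpace ℝ (Fin (n + 1))) 1),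
    fun ε hε => ?_⟩
  have hder : ∀ z, ‖fderiv ℝ (boundaryBump n hε) z‖ ≤ M / (ε / 2) :=
    hM _ _ (by simp only [boundaryBump]; field_simp)
  have hM0 : 0 ≤ M := by
    have := (norm_nonneg _).trans (hder 0)
    rwa [le_div_iff₀ (by positivity), zero_mul] at this
  calc _ ≤ (M / (ε / 2)) ^ p
        * volume.real (closedBall (EuclideanSpace.single (Fin.last n) (2 * ε)) ε) :=
        setIntegral_rpow_norm_fderiv_le (isCompact_closedBall _ _)
          (boundaryBump n hε).tsupport_eq.le hp hder _
    _ = _ := by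
        rw [volume_real_closedBall _ hε.le, div_div_eq_mul_div, mul_comm M,
          div_rpow (by positivity) hε.le, rpow_sub hε]
        ring

noncomputable def criticalExponent (n : ℕ) (p s : ℝ) : ℝ :=
  p * ((n + 1 : ℝ) - s) / ((n + 1 : ℝ) - p)

lemma exists_integral_boundaryBump_weight_ge (hp1 : 1 < p) (hpN : p < n + 1) (hs0 : 0 ≤ s)
    (hsp : s < p) :
    ∃ κ > 0, ∀ ε (hε : 0 < ε), ε ≤ 1 / 6 →
      κ * ε ^ ((n : ℝ) + 1 - p - (p - 1) * (p - s) / ((n + 1 : ℝ) - p))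
        ≤ ∫ z in upperHalfSpace n,
            |boundaryBump n hε z| ^ criticalExponent n p s * hardySobolevWeight p s z := by
  set q := (p - 1) * (p - s) / ((n + 1 : ℝ) - p)
  have hq : 0 ≤ q := div_nonneg (mul_nonneg (by linarith) (by linarith)) (by linarith)
  set C := 12 * max (hardyExponent n p) 1
  have hC : 0 < C := by positivity
  set ω := volume.real (ball (0 : EuclideanSpace ℝ (Fin (n + 1))) 1)
  have hω : 0 < ω := ENNReal.toReal_pos (measure_ball_pos _ _ one_pos).ne' measure_ball_lt_top.ne
  refine ⟨2 ^ (-(s / 2)) * C ^ (-(p + q)) / 2 ^ ((n : ℝ) + 1) * ω, by positivity,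
    fun ε hε hε6 => ?_⟩
  set c : EuclideanSpace ℝ (Fin (n + 1)) := EuclideanSpace.single (Fin.last n) (2 * ε)
  set f := boundaryBump n hε
  set F := fun z => |f z| ^ criticalExponent n p s * hardySobolevWeight p s z
  have he : 0 < criticalExponent n p s :=
    div_pos (mul_pos (by linarith) (by linarith)) (by linarith)
  have hsub : closedBall c ε ⊆ upperHalfSpace n ∩ ball 0 1 := fun z hz => by
    obtain ⟨hy, -, hz⟩ := mem_closedBall_single_last hz
    exact ⟨hε.trans_le hy, mem_ball_zero_iff.2 (by linarith)⟩
  have hhalf : closedBall c (ε / 2) ⊆ closedBall c ε :=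
    closedBall_subset_closedBall (half_le_self hε.le)
  have hFint : IntegrableOn F (upperHalfSpace n) := by
    have hFcont : ContinuousOn F (closedBall c ε) :=
      (f.continuous.abs.rpow_const fun _ => Or.inr he.le).continuousOn.mul
        ((continuousOn_hardySobolevWeight hp1 hpN).mono hsub)
    refine (hFcont.integrableOn_compact (isCompact_closedBall _ _)).of_forall_sdiff_eq_zero
      isOpen_upperHalfSpace.measurableSet fun z hz => ?_
    have : f z = 0 := image_eq_zero_of_notMem_tsupport (by rw [f.tsupport_eq]; exact hz.2)
    simp [F, this, zero_rpow he.ne']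
  have hF0 : ∀ z ∈ upperHalfSpace n, 0 ≤ F z := fun z hz =>
    mul_nonneg (by positivity) (hardySobolevWeight_nonneg hp1 hpN hz)
  have hlow : ∀ z ∈ closedBall c (ε / 2), 2 ^ (-(s / 2)) * (C * ε) ^ (-(p + q)) ≤ F z := by
    intro z hz
    obtain ⟨hy : 0 < z (Fin.last n), hzB⟩ := hsub (hhalf hz)
    have hy3 := (mem_closedBall_single_last (hhalf hz)).2.1
    simp only [F, f.one_of_mem_closedBall hz, abs_one, one_rpow, one_mul]
    refine le_trans ?_ (hardySobolevWeight_ge hp1 hpN hs0 hsp hy (mem_ball_zero_iff.1 hzB))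
    gcongr 2 ^ (-(s / 2)) * ?_
    refine rpow_le_rpow_of_nonpos (by positivity) ?_ (by linarith)
    nlinarith [le_max_right (hardyExponent n p) 1]
  calc _ = 2 ^ (-(s / 2)) * (C * ε) ^ (-(p + q)) * volume.real (closedBall c (ε / 2)) := by
        rw [volume_real_closedBall _ (by positivity), mul_rpow hC.le hε.le,
          div_rpow hε.le zero_le_two, sub_sub, sub_eq_add_neg (_ + _), rpow_add hε]
        ring
    _ ≤ ∫ z in closedBall c (ε / 2), F z :=
        setIntegral_ge_of_const_le_real measurableSet_closedBall measure_closedBall_lt_top.ne hlow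
          (hFint.mono_set fun z hz => (hsub (hhalf hz)).1)
    _ ≤ ∫ z in upperHalfSpace n, F z :=
        setIntegral_mono_set hFint
          ((ae_restrict_iff' isOpen_upperHalfSpace.measurableSet).2 (.of_forall hF0))
          (.of_forall fun z hz => (hsub (hhalf hz)).1)

noncomputable def hardySobolevQuotient (p s : ℝ) (u : EuclideanSpace ℝ (Fin (n + 1)) → ℝ) :
    ℝ :=
  (∫ z in upperHalfSpace n, ‖fderiv ℝ u z‖ ^ p)
    / (∫ z in upperHalfSpace n, |u z| ^ criticalExponent n p s * hardySobolevWeight p s z)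
      ^ (p / criticalExponent n p s)

lemma hardySobolevQuotient_nonneg (hp1 : 1 < p) (hpN : p < n + 1)
    (u : EuclideanSpace ℝ (Fin (n + 1)) → ℝ) : 0 ≤ hardySobolevQuotient p s u :=
  div_nonneg (integral_nonneg fun _ => by positivity) <| rpow_nonneg
    (setIntegral_nonneg isOpen_upperHalfSpace.measurableSet fun _ hz =>
      mul_nonneg (by positivity) (hardySobolevWeight_nonneg hp1 hpN hz)) _

lemma exists_hardySobolevQuotient_boundaryBump_le (hp1 : 1 < p) (hpN : p < n + 1) (hs0 : 0 ≤ s)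
    (hsp : s < p) :
    ∃ C, ∀ ε (hε : 0 < ε), ε ≤ 1 / 6 →
      hardySobolevQuotient p s (boundaryBump n hε)
        ≤ C * ε ^ ((p - s) * n / ((n : ℝ) + 1 - s)) := by
  obtain ⟨K, hK⟩ := exists_integral_fderiv_boundaryBump_le (n := n) (p := p) (by linarith)
  obtain ⟨κ, hκ, hκε⟩ := exists_integral_boundaryBump_weight_ge hp1 hpN hs0 hsp
  have hNp : (n : ℝ) + 1 - p ≠ 0 := by linarith
  have hNs : (n : ℝ) + 1 - s ≠ 0 := by linarith
  set t := p / criticalExponent n p s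
  have ht : t = ((n : ℝ) + 1 - p) / ((n : ℝ) + 1 - s) := by
    simp only [t, criticalExponent]; field_simp
  have ht0 : 0 ≤ t := by rw [ht]; exact div_nonneg (by linarith) (by linarith)
  refine ⟨K / κ ^ t, fun ε hε hε6 => ?_⟩
  have hnum := hK ε hε
  calc hardySobolevQuotient p s (boundaryBump n hε)
      ≤ K * ε ^ ((n : ℝ) + 1 - p)
        / (κ * ε ^ ((n : ℝ) + 1 - p - (p - 1) * (p - s) / ((n + 1 : ℝ) - p))) ^ t :=
        div_le_div₀ ((integral_nonneg fun _ => by positivity).trans hnum) hnum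
          (by positivity) (rpow_le_rpow (by positivity) (hκε ε hε hε6) ht0)
    _ = K / κ ^ t * ε ^ ((p - s) * n / ((n : ℝ) + 1 - s)) := by
        rw [mul_rpow_div_mul_rpow_rpow hκ.le hε, ht]
        congr 2
        field_simp
        ring

lemma exists_hardySobolevQuotient_lt (hp1 : 1 < p) (hpN : p < n + 1) (hs0 : 0 ≤ s) (hsp : s < p)
    {δ : ℝ} (hδ : 0 < δ) :
    ∃ u : EuclideanSpace ℝ (Fin (n + 1)) → ℝ, ContDiff ℝ 1 u ∧ HasCompactSupport u ∧
      tsupport u ⊆ upperHalfSpace n ∧ u ≠ 0 ∧ hardySobolevQuotient p s u < δ := by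
  obtain ⟨C, hC⟩ := exists_hardySobolevQuotient_boundaryBump_le hp1 hpN hs0 hsp
  set E := (p - s) * n / ((n : ℝ) + 1 - s)
  have hE : 0 < E := div_pos (mul_pos (by linarith) (by linarith)) (by linarith)
  have hlim : Tendsto (fun ε : ℝ => C * ε ^ E) (𝓝[>] 0) (𝓝 0) := by
    have := ((continuous_id.rpow_const fun _ => Or.inr hE.le).const_mul C).tendsto 0
    simp only [id, zero_rpow hE.ne', mul_zero] at this
    exact this.mono_left nhdsWithin_le_nhds
  obtain ⟨ε, hεδ, hε, hε6⟩ := ((hlim.eventually (gt_mem_nhds hδ)).and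
    (Ioc_mem_nhdsGT (by norm_num : (0 : ℝ) < 1 / 6))).exists
  set f := boundaryBump n hε
  have hf : (f : EuclideanSpace ℝ (Fin (n + 1)) → ℝ) ≠ 0 := fun h => by
    simpa [h] using f.one_of_mem_closedBall (mem_closedBall_self (half_pos hε).le)
  exact ⟨f, f.contDiff, f.hasCompactSupport, tsupport_boundaryBump_subset hε, hf,
    (hC ε hε hε6).trans_lt hεδ⟩

theorem sInf_hardySobolevQuotient_eq_zero (hp1 : 1 < p) (hpN : p < n + 1) (hs0 : 0 ≤ s)
    (hsp : s < p) :
    sInf {r : ℝ | ∃ u : EuclideanSpace ℝ (Fin (n + 1)) → ℝ, ContDiff ℝ 1 u ∧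
      HasCompactSupport u ∧ tsupport u ⊆ upperHalfSpace n ∧ u ≠ 0 ∧
      r = hardySobolevQuotient p s u} = 0 := by
  refine Real.sInf_eq_zero_of_nonneg_of_forall_lt ?_ fun δ hδ => ?_
  · rintro _ ⟨u, -, -, -, -, rfl⟩
    exact hardySobolevQuotient_nonneg hp1 hpN u
  · obtain ⟨u, hu1, hu2, hu3, hu4, hlt⟩ := exists_hardySobolevQuotient_lt hp1 hpN hs0 hsp hδ
    exact ⟨_, ⟨u, hu1, hu2, hu3, hu4, rfl⟩, hlt⟩

end HardySobolev

theorem stmt19_general {n : ℕ} (p s : ℝ) (hp1 : 1 < p) (hpN : p < (n + 1 : ℝ))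
    (hs0 : 0 ≤ s) (hsp : s < p) :
    sInf {r : ℝ | ∃ u : EuclideanSpace ℝ (Fin (n + 1)) → ℝ,
        ContDiff ℝ 1 u ∧ HasCompactSupport u ∧
        tsupport u ⊆ {z : EuclideanSpace ℝ (Fin (n + 1)) | 0 < z (Fin.last n)} ∧
        u ≠ 0 ∧
        r = (∫ z in {z : EuclideanSpace ℝ (Fin (n + 1)) | 0 < z (Fin.last n)},
                ‖fderiv ℝ u z‖ ^ p) /
            ((∫ z in {z : EuclideanSpace ℝ (Fin (n + 1)) | 0 < z (Fin.last n)},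
                |u z| ^ (p * ((n + 1 : ℝ) - s) / ((n + 1 : ℝ) - p))
                  * AA z ^ (-(s / 2)) * Vp p z ^ (p / 2)
                  * (1 - XX z ^ (((n + 1 : ℝ) - p) / (2 * (p - 1))))
                      ^ (-((p - 1) * (p - s) / ((n + 1 : ℝ) - p))))
              ^ (p / (p * ((n + 1 : ℝ) - s) / ((n + 1 : ℝ) - p))))}
      = 0 := by
  have := sInf_hardySobolevQuotient_eq_zero (n := n) hp1 hpN hs0 hsp
  simpa only [hardySobolevQuotient, hardySobolevWeight, criticalExponent, hardyExponent,
    upperHalfSpace, mul_assoc] using this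

/-- Non-validity of the improved Hardy–Sobolev inequality without symmetry:
for `1 < p < N`, `0 ≤ s < p`, `p*(s) = p(N−s)/(N−p)`, the infimum over nonzero
`u ∈ C_c^1(ℝ^N_+)` of the corresponding Rayleigh-type quotient is `0`. -/
theorem stmt19 {n : ℕ} (hn : 1 ≤ n) (p s : ℝ) (hp1 : 1 < p) (hpN : p < (n + 1 : ℝ))
    (hs0 : 0 ≤ s) (hsp : s < p) :
    sInf {r : ℝ | ∃ u : EuclideanSpace ℝ (Fin (n + 1)) → ℝ,
        ContDiff ℝ 1 u ∧ HasCompactSupport u ∧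
        tsupport u ⊆ {z : EuclideanSpace ℝ (Fin (n + 1)) | 0 < z (Fin.last n)} ∧
        u ≠ 0 ∧
        r = (∫ z in {z : EuclideanSpace ℝ (Fin (n + 1)) | 0 < z (Fin.last n)},
                ‖fderiv ℝ u z‖ ^ p) /
            ((∫ z in {z : EuclideanSpace ℝ (Fin (n + 1)) | 0 < z (Fin.last n)},
                |u z| ^ (p * ((n + 1 : ℝ) - s) / ((n + 1 : ℝ) - p))
                  * AA z ^ (-(s / 2)) * Vp p z ^ (p / 2)
                  * (1 - XX z ^ (((n + 1 : ℝ) - p) / (2 * (p - 1))))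
                      ^ (-((p - 1) * (p - s) / ((n + 1 : ℝ) - p))))
              ^ (p / (p * ((n + 1 : ℝ) - s) / ((n + 1 : ℝ) - p))))}
      = 0 :=
  stmt19_general p s hp1 hpN hs0 hsp
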